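/- arXiv:2306.11885 — 4 statements merged into one kernel-verified Lean document; each statement's English description precedes it below -/
import Mathlib

section
/- Let Ω be a nonempty finite set, let p and a be probability mass functions on Ω (nonnegative real-valued functions summing to 1) such that a is absolutely continuous with respect to p (i.e., p(ω) = 0 implies a(ω) = 0), let Q : Ω → ℝ be any function, and let ρ < 0 be a real number. Then (1/ρ) · ln( Σ_{ω ∈ Ω} p(ω) · exp(ρ · Q(ω)) ) ≤ Σ_{ω ∈ Ω} a(ω) · Q(ω) + |ρ|⁻¹ · Σ_{ω ∈ Ω} a(ω) · ln( a(ω)/p(ω) ), where the summands with a(ω) = 0 in the last sum are taken to be 0. -/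
/-! The bound is the Gibbs (Donsker–Varadhan) variational inequality
`∑ a f - KL(a‖p) ≤ log ∑ p e^f`, applied to `f = ρ Q` and divided by `ρ < 0`.
The variational inequality itself is the sum over `Ω` of the pointwise Fenchel–Young inequality
`a y ≤ a log (a / p) + p e^(y - 1)` for the convex function `u ↦ u log u`, taken at
`y = f ω - log Z + 1` where `Z = ∑ p e^f`. -/

open Real Finset

lemma mul_le_mul_log_div_add_mul_exp_sub_one {a p : ℝ} (ha : 0 ≤ a) (hp : 0 ≤ p)
    (hac : p = 0 → a = 0) (y : ℝ) :
    a * y ≤ a * log (a / p) + p * exp (y - 1) := by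
  rcases ha.eq_or_lt with rfl | ha
  · simpa using mul_nonneg hp (exp_pos (y - 1)).le
  have hp : 0 < p := hp.lt_of_ne fun h => ha.ne' (hac h.symm)
  have hexp : a * exp (y - 1 - log (a / p)) = p * exp (y - 1) := by
    rw [exp_sub, exp_log (by positivity)]
    field_simp
  have htangent := mul_le_mul_of_nonneg_left (add_one_le_exp (y - 1 - log (a / p))) ha.le
  linarith

lemma sum_mul_sub_sum_mul_log_div_le_log_sum_mul_exp {Ω : Type*} [Fintype Ω] {p a : Ω → ℝ}
    (hp0 : ∀ ω, 0 ≤ p ω) (ha0 : ∀ ω, 0 ≤ a ω) (ha1 : ∑ ω, a ω = 1)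
    (hac : ∀ ω, p ω = 0 → a ω = 0) (f : Ω → ℝ) :
    ∑ ω, a ω * f ω - ∑ ω, a ω * log (a ω / p ω) ≤ log (∑ ω, p ω * exp (f ω)) := by
  set Z := ∑ ω, p ω * exp (f ω)
  have hZ : 0 < Z := by
    obtain ⟨ω, -, haω⟩ := exists_ne_zero_of_sum_ne_zero (ha1.trans_ne one_ne_zero)
    have hpω : 0 < p ω := (hp0 ω).lt_of_ne fun h => haω (hac ω h.symm)
    exact sum_pos' (fun ω _ => mul_nonneg (hp0 ω) (exp_pos _).le)
      ⟨ω, mem_univ _, mul_pos hpω (exp_pos _)⟩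
  have hpointwise : ∀ ω, a ω * (f ω - log Z + 1) ≤
      a ω * log (a ω / p ω) + p ω * exp (f ω) / Z := fun ω => by
    have := mul_le_mul_log_div_add_mul_exp_sub_one (ha0 ω) (hp0 ω) (hac ω) (f ω - log Z + 1)
    rwa [add_sub_cancel_right, exp_sub, exp_log hZ, ← mul_div_assoc] at this
  have hnormalized : ∑ ω, p ω * exp (f ω) / Z = 1 := by rw [← sum_div, div_self hZ.ne']
  have hsum := sum_le_sum fun ω (_ : ω ∈ univ) => hpointwise ω
  simp only [mul_add, mul_sub, mul_one, sum_add_distrib, sum_sub_distrib, ← sum_mul, ha1,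
    hnormalized] at hsum
  linarith

theorem free_energy_lower_bound_general {Ω : Type*} [Fintype Ω]
    (p a : Ω → ℝ) (Q : Ω → ℝ) (ρ : ℝ)
    (hp0 : ∀ ω, 0 ≤ p ω)
    (ha0 : ∀ ω, 0 ≤ a ω) (ha1 : ∑ ω, a ω = 1)
    (hac : ∀ ω, p ω = 0 → a ω = 0)
    (hρ : ρ < 0) :
    (1 / ρ) * Real.log (∑ ω, p ω * Real.exp (ρ * Q ω)) ≤
      ∑ ω, a ω * Q ω + |ρ|⁻¹ * ∑ ω, a ω * Real.log (a ω / p ω) := by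
  have hgibbs := sum_mul_sub_sum_mul_log_div_le_log_sum_mul_exp hp0 ha0 ha1 hac (fun ω => ρ * Q ω)
  calc (1 / ρ) * log (∑ ω, p ω * exp (ρ * Q ω))
      ≤ (1 / ρ) * (∑ ω, a ω * (ρ * Q ω) - ∑ ω, a ω * log (a ω / p ω)) :=
        mul_le_mul_of_nonpos_left hgibbs (one_div_neg.mpr hρ).le
    _ = ∑ ω, a ω * Q ω + |ρ|⁻¹ * ∑ ω, a ω * log (a ω / p ω) := by
        simp only [mul_left_comm _ ρ, ← mul_sum, abs_of_neg hρ]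
        have hρ0 := hρ.ne
        field_simp
        ring

/-- Lemma 1 (Donsker–Varadhan style bound): for PMFs `p`, `a` on a nonempty
finite set with `a` absolutely continuous w.r.t. `p`, any `Q : Ω → ℝ` and
`ρ < 0`, one has
`(1/ρ) ln (Σ p(ω) e^{ρ Q(ω)}) ≤ Σ a(ω) Q(ω) + |ρ|⁻¹ KL(a‖p)`. -/
theorem free_energy_lower_bound {Ω : Type*} [Fintype Ω] [Nonempty Ω]
    (p a : Ω → ℝ) (Q : Ω → ℝ) (ρ : ℝ)
    (hp0 : ∀ ω, 0 ≤ p ω) (hp1 : ∑ ω, p ω = 1)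
    (ha0 : ∀ ω, 0 ≤ a ω) (ha1 : ∑ ω, a ω = 1)
    (hac : ∀ ω, p ω = 0 → a ω = 0)
    (hρ : ρ < 0) :
    (1 / ρ) * Real.log (∑ ω, p ω * Real.exp (ρ * Q ω)) ≤
      ∑ ω, a ω * Q ω + |ρ|⁻¹ * ∑ ω, a ω * Real.log (a ω / p ω) :=
  free_energy_lower_bound_general p a Q ρ hp0 ha0 ha1 hac hρ
end

section
/- Let Ω be a nonempty finite set, let p be a probability mass function on Ω, and let Q : Ω → ℝ. Then −ln( Σ_{ω ∈ Ω} p(ω) · exp(−Q(ω)) ) = min over all probability mass functions a on Ω that are absolutely continuous with respect to p of the quantity Σ_{ω} a(ω) · Q(ω) + KL(a‖p); in particular the minimum is attained, namely at a*(ω) = p(ω) · exp(−Q(ω)) / (Σ_{ω'} p(ω') · exp(−Q(ω'))). -/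
/-- `−ln Σ p(ω) e^{−Q(ω)}` is the minimum, over all PMFs `a` absolutely
continuous w.r.t. `p`, of `Σ a(ω) Q(ω) + KL(a‖p)`; and the minimum is
attained at the Gibbs distribution `a*(ω) = p(ω) e^{−Q(ω)} / Σ p e^{−Q}`. -/
theorem gibbs_variational_principle {Ω : Type*} [Fintype Ω] [Nonempty Ω]
    (p : Ω → ℝ) (Q : Ω → ℝ)
    (hp0 : ∀ ω, 0 ≤ p ω) (hp1 : ∑ ω, p ω = 1) :
    IsLeast
      { v : ℝ | ∃ a : Ω → ℝ, (∀ ω, 0 ≤ a ω) ∧ (∑ ω, a ω = 1) ∧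
          (∀ ω, p ω = 0 → a ω = 0) ∧
          v = ∑ ω, a ω * Q ω + ∑ ω, a ω * Real.log (a ω / p ω) }
      (-Real.log (∑ ω, p ω * Real.exp (-Q ω))) ∧
    (∑ ω, (p ω * Real.exp (-Q ω) / ∑ ω', p ω' * Real.exp (-Q ω')) * Q ω +
      ∑ ω, (p ω * Real.exp (-Q ω) / ∑ ω', p ω' * Real.exp (-Q ω')) *
        Real.log ((p ω * Real.exp (-Q ω) / ∑ ω', p ω' * Real.exp (-Q ω')) / p ω)
      = -Real.log (∑ ω, p ω * Real.exp (-Q ω))) := by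
  have hZpos : 0 < ∑ ω, p ω * Real.exp (-Q ω) := by
    apply Finset.sum_pos' (fun i _ => mul_nonneg (hp0 i) (Real.exp_pos _).le)
    by_contra h
    push_neg at h
    have hall : ∀ ω, p ω = 0 := by
      intro ω
      have h1 := h ω (Finset.mem_univ ω)
      have h2 := Real.exp_pos (-Q ω)
      nlinarith [hp0 ω]
    simp [hall] at hp1
  set Z : ℝ := ∑ ω, p ω * Real.exp (-Q ω) with hZdef
  set astar : Ω → ℝ := fun ω => p ω * Real.exp (-Q ω) / Z with hastar
  have hastar0 : ∀ ω, 0 ≤ astar ω := fun ω =>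
    div_nonneg (mul_nonneg (hp0 ω) (Real.exp_pos _).le) hZpos.le
  have hastar1 : ∑ ω, astar ω = 1 := by
    rw [hastar, ← Finset.sum_div, ← hZdef, div_self hZpos.ne']
  have hastarac : ∀ ω, p ω = 0 → astar ω = 0 := by
    intro ω hpω; simp [hastar, hpω]
  -- pointwise value at the Gibbs distribution
  have hpt : ∀ ω, astar ω * Q ω + astar ω * Real.log (astar ω / p ω)
      = -(astar ω * Real.log Z) := by
    intro ω
    rcases eq_or_lt_of_le (hp0 ω) with hp | hp
    · simp [hastar, ← hp]
    · have hlog : Real.log (astar ω / p ω) = -Q ω - Real.log Z := by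
        have : astar ω / p ω = Real.exp (-Q ω) / Z := by
          rw [hastar]
          field_simp
        rw [this, Real.log_div (Real.exp_ne_zero _) hZpos.ne', Real.log_exp]
      rw [hlog]; ring
  have heq : ∑ ω, astar ω * Q ω + ∑ ω, astar ω * Real.log (astar ω / p ω)
      = -Real.log Z := by
    rw [← Finset.sum_add_distrib]
    calc ∑ ω, (astar ω * Q ω + astar ω * Real.log (astar ω / p ω))
        = ∑ ω, -(astar ω * Real.log Z) := Finset.sum_congr rfl (fun ω _ => hpt ω)
      _ = -((∑ ω, astar ω) * Real.log Z) := by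
          rw [Finset.sum_neg_distrib, Finset.sum_mul]
      _ = -Real.log Z := by rw [hastar1, one_mul]
  constructor
  · constructor
    · exact ⟨astar, hastar0, hastar1, hastarac, heq.symm⟩
    · rintro v ⟨a, ha0, ha1, hac, rfl⟩
      have key : ∀ ω, a ω - astar ω ≤
          a ω * Q ω + a ω * Real.log (a ω / p ω) + a ω * Real.log Z := by
        intro ω
        rcases eq_or_lt_of_le (ha0 ω) with haω | haω
        · rw [← haω]; simp [hastar0 ω]
        · have hpω : 0 < p ω := by
            rcases eq_or_lt_of_le (hp0 ω) with hp | hp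
            · exact absurd (hac ω hp.symm) haω.ne'
            · exact hp
          have hastarpos : 0 < astar ω := div_pos (mul_pos hpω (Real.exp_pos _)) hZpos
          have hlog : Real.log (astar ω / a ω) ≤ astar ω / a ω - 1 :=
            Real.log_le_sub_one_of_pos (div_pos hastarpos haω)
          have h1 : a ω - astar ω ≤ a ω * Real.log (a ω / astar ω) := by
            have h2 : Real.log (a ω / astar ω) = -Real.log (astar ω / a ω) := by
              rw [Real.log_div haω.ne' hastarpos.ne',
                Real.log_div hastarpos.ne' haω.ne']; ring
            have h3 := mul_le_mul_of_nonneg_left hlog haω.le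
            have h4 : a ω * (astar ω / a ω - 1) = astar ω - a ω := by
              field_simp
            rw [h2]; nlinarith
          have hexpand : Real.log (a ω / astar ω)
              = Real.log (a ω / p ω) + Q ω + Real.log Z := by
            rw [Real.log_div haω.ne' hastarpos.ne', Real.log_div haω.ne' hpω.ne']
            have : Real.log (astar ω) = Real.log (p ω) - Q ω - Real.log Z := by
              rw [hastar]
              simp only
              rw [Real.log_div (by positivity) hZpos.ne',
                Real.log_mul hpω.ne' (Real.exp_ne_zero _), Real.log_exp]
              ring
            rw [this]; ring
          nlinarith [h1, hexpand]
      have hsum : ∑ ω, (a ω - astar ω) ≤ ∑ ω, (a ω * Q ω + a ω * Real.log (a ω / p ω) + a ω * Real.log Z) := Finset.sum_le_sum (fun ω _ => key ω)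
      rw [Finset.sum_sub_distrib, ha1, hastar1, sub_self] at hsum
      have hsplit : ∑ ω, (a ω * Q ω + a ω * Real.log (a ω / p ω) + a ω * Real.log Z)
          = ∑ ω, a ω * Q ω + ∑ ω, a ω * Real.log (a ω / p ω) + Real.log Z := by
        rw [Finset.sum_add_distrib, Finset.sum_add_distrib, ← Finset.sum_mul, ha1, one_mul]
      rw [hsplit] at hsum
      linarith
  · exact heq
end

section
/- Let X be a nonempty finite set and N ≥ 2. Consider a forward Markov chain specified by an initial probability mass function q₁ on X and transition kernels P_k(·|x) (a probability mass function on X for each x ∈ X and each k = 1,…,N−1), with forward trajectory probability P(x₁,…,x_N) = q₁(x₁) · Π_{k=1}^{N−1} P_k(x_{k+1}|x_k), and let q_N be the resulting marginal of x_N. Let B_k(·|x') be backward transition kernels (a probability mass function on X for each x' ∈ X, k = 1,…,N−1), with backward trajectory probability P_B(x₁,…,x_N) = q_N(x_N) · Π_{k=1}^{N−1} B_k(x_k|x_{k+1}). Assume that P_B(x₁,…,x_N) > 0 whenever P(x₁,…,x_N) > 0. Define the entropy production of a trajectory O = (x₁,…,x_N) with P(O) > 0 as σ(O) = ln( P(O)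 / P_B(O) ). Then the expected entropy production is nonnegative: Σ_{O : P(O) > 0} P(O) · σ(O) ≥ 0 (the second law of thermodynamics for Markovian systems). -/
lemma chain_sum_fwd {X : Type*} [Fintype X] (n : ℕ) :
    ∀ (f : X → ℝ) (P : ℕ → X → X → ℝ), (∀ k x, ∑ x', P k x x' = 1) →
    ∑ O : Fin (n + 1) → X, f (O 0) * ∏ k : Fin n, P k (O k.castSucc) (O k.succ)
      = ∑ x, f x := by
  induction n with
  | zero =>
    intro f P hP
    rw [← Fintype.sum_equiv (Equiv.funUnique (Fin 1) X).symm f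
      (fun O => f (O 0) * ∏ k : Fin 0, P k (O k.castSucc) (O k.succ))]
    intro x
    simp
  | succ n ih =>
    intro f P hP
    rw [← Fintype.sum_equiv (Fin.consEquiv (fun _ : Fin (n+2) => X))
      (fun p => f p.1 * P 0 p.1 (p.2 0) *
        ∏ k : Fin n, P (k + 1) (p.2 k.castSucc) (p.2 k.succ))
      (fun O => f (O 0) * ∏ k : Fin (n+1), P k (O k.castSucc) (O k.succ))]
    · rw [Fintype.sum_prod_type]
      have : ∀ x : X, ∑ O : Fin (n+1) → X, f x * P 0 x (O 0) *
          ∏ k : Fin n, P (k+1) (O k.castSucc) (O k.succ)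
          = f x := by
        intro x
        have h2 := ih (fun y => f x * P 0 x y) (fun k => P (k+1))
          (fun k y => hP (k+1) y)
        rw [h2, ← Finset.mul_sum, hP 0 x, mul_one]
      simp only [this]
    · rintro ⟨x, O⟩
      simp only [Fin.consEquiv_apply]
      rw [Fin.prod_univ_succ]
      simp only [← Fin.succ_castSucc, Fin.cons_succ, Fin.castSucc_zero,
        Fin.cons_zero, Fin.succ_zero_eq_one, Fin.val_succ, Fin.val_zero]
      have h1 : (Fin.cons x O : Fin (n+2) → X) 1 = O 0 := by
        rw [← Fin.succ_zero_eq_one, Fin.cons_succ]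
      rw [h1]
      ring

lemma chain_sum_bwd {X : Type*} [Fintype X] (n : ℕ) :
    ∀ (f : X → ℝ) (B : ℕ → X → X → ℝ), (∀ k x', ∑ x, B k x' x = 1) →
    ∑ O : Fin (n + 1) → X,
      f (O (Fin.last n)) * ∏ k : Fin n, B k (O k.succ) (O k.castSucc)
      = ∑ x, f x := by
  induction n with
  | zero =>
    intro f B hB
    rw [← Fintype.sum_equiv (Equiv.funUnique (Fin 1) X).symm f
      (fun O => f (O (Fin.last 0)) * ∏ k : Fin 0, B k (O k.succ) (O k.castSucc))]
    intro x
    simp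
  | succ n ih =>
    intro f B hB
    rw [← Fintype.sum_equiv (Fin.consEquiv (fun _ : Fin (n+2) => X))
      (fun p => f (p.2 (Fin.last n)) * (B 0 (p.2 0) p.1 *
        ∏ k : Fin n, B (k + 1) (p.2 k.succ) (p.2 k.castSucc)))
      (fun O => f (O (Fin.last (n+1))) *
        ∏ k : Fin (n+1), B k (O k.succ) (O k.castSucc))]
    · rw [Fintype.sum_prod_type_right]
      have : ∀ O : Fin (n+1) → X, ∑ x : X, f (O (Fin.last n)) * (B 0 (O 0) x *
          ∏ k : Fin n, B (k+1) (O k.succ) (O k.castSucc))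
          = f (O (Fin.last n)) * ∏ k : Fin n, B (k+1) (O k.succ) (O k.castSucc) := by
        intro O
        rw [← Finset.mul_sum, ← Finset.sum_mul, hB 0 (O 0), one_mul]
      simp only [this]
      exact ih f (fun k => B (k+1)) (fun k y => hB (k+1) y)
    · rintro ⟨x, O⟩
      simp only [Fin.consEquiv_apply]
      rw [Fin.prod_univ_succ]
      have hlast : (Fin.cons x O : Fin (n+2) → X) (Fin.last (n+1)) = O (Fin.last n) := by
        rw [← Fin.succ_last, Fin.cons_succ]
      rw [hlast]
      simp only [← Fin.succ_castSucc, Fin.cons_succ, Fin.castSucc_zero,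
        Fin.cons_zero, Fin.succ_zero_eq_one, Fin.val_succ, Fin.val_zero]
      have h1 : (Fin.cons x O : Fin (n+2) → X) 1 = O 0 := by
        rw [← Fin.succ_zero_eq_one, Fin.cons_succ]
      rw [h1]

/-- Second law of thermodynamics for a Markovian system: for a forward Markov
chain on a nonempty finite set `X` with `N = n + 1 ≥ 2` time steps, initial
PMF `q₁`, forward kernels `P k`, final-time marginal `qN`, and backward
kernels `B k`, whenever the backward trajectory probability is positive on the
support of the forward one, the expected entropy production
`Σ_{O : P(O)>0} P(O) ln(P(O)/P_B(O))` is nonnegative. -/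
theorem second_law_markov {X : Type*} [Fintype X] [DecidableEq X] [Nonempty X]
    (n : ℕ) (hn : 1 ≤ n)
    (q1 : X → ℝ) (hq0 : ∀ x, 0 ≤ q1 x) (hq1 : ∑ x, q1 x = 1)
    (P : ℕ → X → X → ℝ)
    (hP0 : ∀ k x x', 0 ≤ P k x x') (hP1 : ∀ k x, ∑ x', P k x x' = 1)
    (B : ℕ → X → X → ℝ)
    (hB0 : ∀ k x' x, 0 ≤ B k x' x) (hB1 : ∀ k x', ∑ x, B k x' x = 1)
    (Fwd : (Fin (n + 1) → X) → ℝ)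
    (hFwd : ∀ O, Fwd O = q1 (O 0) * ∏ k : Fin n, P k (O k.castSucc) (O k.succ))
    (qN : X → ℝ)
    (hqN : ∀ x, qN x = ∑ O : Fin (n + 1) → X,
      if O (Fin.last n) = x then Fwd O else 0)
    (Bwd : (Fin (n + 1) → X) → ℝ)
    (hBwd : ∀ O, Bwd O
      = qN (O (Fin.last n)) * ∏ k : Fin n, B k (O k.succ) (O k.castSucc))
    (hsupp : ∀ O, 0 < Fwd O → 0 < Bwd O) :
    0 ≤ ∑ O : Fin (n + 1) → X,
      (if 0 < Fwd O then Fwd O * Real.log (Fwd O / Bwd O) else 0) := by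
  have hFwd0 : ∀ O, 0 ≤ Fwd O := by
    intro O
    rw [hFwd O]
    exact mul_nonneg (hq0 _) (Finset.prod_nonneg fun k _ => hP0 _ _ _)
  have hFwdSum : ∑ O : Fin (n + 1) → X, Fwd O = 1 := by
    have := chain_sum_fwd (X := X) n q1 P hP1
    simp only [← hFwd] at this
    rw [this, hq1]
  have hqN0 : ∀ x, 0 ≤ qN x := by
    intro x
    rw [hqN x]
    exact Finset.sum_nonneg fun O _ => by split_ifs; exacts [hFwd0 O, le_refl 0]
  have hBwd0 : ∀ O, 0 ≤ Bwd O := by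
    intro O
    rw [hBwd O]
    exact mul_nonneg (hqN0 _) (Finset.prod_nonneg fun k _ => hB0 _ _ _)
  have hqNsum : ∑ x, qN x = 1 := by
    simp only [hqN]
    rw [Finset.sum_comm]
    calc ∑ O : Fin (n + 1) → X, ∑ x, (if O (Fin.last n) = x then Fwd O else 0)
        = ∑ O : Fin (n + 1) → X, Fwd O := by
          apply Finset.sum_congr rfl
          intro O _
          simp
      _ = 1 := hFwdSum
  have hBwdSum : ∑ O : Fin (n + 1) → X, Bwd O = 1 := by
    have := chain_sum_bwd (X := X) n qN B hB1
    simp only [← hBwd] at this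
    rw [this, hqNsum]
  have key : ∀ O : Fin (n + 1) → X,
      Fwd O - (if 0 < Fwd O then Bwd O else 0)
        ≤ (if 0 < Fwd O then Fwd O * Real.log (Fwd O / Bwd O) else 0) := by
    intro O
    by_cases h : 0 < Fwd O
    · simp only [h, if_true]
      have hb := hsupp O h
      have hlog : Real.log (Bwd O / Fwd O) ≤ Bwd O / Fwd O - 1 :=
        Real.log_le_sub_one_of_pos (div_pos hb h)
      have : Real.log (Fwd O / Bwd O) = - Real.log (Bwd O / Fwd O) := by
        rw [← Real.log_inv, inv_div]
      rw [this]
      have := mul_le_mul_of_nonneg_left hlog (le_of_lt h)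
      nlinarith [mul_div_cancel₀ (Bwd O) (ne_of_gt h)]
    · simp only [h, if_false]
      have : Fwd O = 0 := le_antisymm (not_lt.mp h) (hFwd0 O)
      simp [this]
  calc (0:ℝ) = 1 - 1 := by ring
    _ ≤ (∑ O : Fin (n + 1) → X, Fwd O)
          - ∑ O : Fin (n + 1) → X, (if 0 < Fwd O then Bwd O else 0) := by
        rw [hFwdSum]
        gcongr
        rw [← hBwdSum]
        apply Finset.sum_le_sum
        intro O _
        split_ifs
        exacts [le_refl _, hBwd0 O]
    _ = ∑ O : Fin (n + 1) → X, (Fwd O - (if 0 < Fwd O then Bwd O else 0)) := by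
        rw [Finset.sum_sub_distrib]
    _ ≤ _ := Finset.sum_le_sum fun O _ => key O
end

section
/- Let X be a nonempty finite set and N ≥ 2. With the forward trajectory probability P(x₁,…,x_N) = q₁(x₁) · Π_{k=1}^{N−1} P_k(x_{k+1}|x_k) (where q₁ is a probability mass function on X and each P_k(·|x) is a probability mass function on X), marginal q_N of x_N, backward kernels B_k(·|x') (each a probability mass function on X), and backward trajectory probability P_B(x₁,…,x_N) = q_N(x_N) · Π_{k=1}^{N−1} B_k(x_k|x_{k+1}), suppose the forward and backward trajectory measures have equal supports: P(O) > 0 if and only if P_B(O) > 0. Define σ(O) = ln( P(O)/P_B(O) ) for trajectories with P(O) > 0. Then the integral fluctuation theorem holds: Σ_{O : P(O) > 0} P(O) · exp(−σ(O)) = 1. -/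
/-!
On the support, `P(O) e^{-σ(O)} = P_B(O)`, and off it both measures vanish, so the sum is the
total mass of the backward measure. Summing out `x₁, …, x_{N-1}` against the normalized backward
kernels reduces it to `Σ q_N`, the total forward mass, and summing out `x_N, …, x₂` against the
normalized forward kernels reduces that to `Σ q₁ = 1`.
-/

open Finset

section Kernel

variable {X R : Type*} [Fintype X] [CommSemiring R]

theorem sum_mul_prod_kernel_forward (P : ℕ → X → X → R) (hP : ∀ k x, ∑ x', P k x x' = 1)
    (f : X → R) (n : ℕ) :
    ∑ O : Fin (n + 1) → X, f (O 0) * ∏ k : Fin n, P k (O k.castSucc) (O k.succ) = ∑ x, f x := by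
  induction n with
  | zero => simp [← (Equiv.funUnique (Fin 1) X).symm.sum_comp]
  | succ n ih =>
    rw [← (Fin.snocEquiv fun _ => X).sum_comp, Fintype.sum_prod_type, sum_comm, ← ih]
    refine sum_congr rfl fun t _ => ?_
    simp [Fin.prod_univ_castSucc, Fin.succ_castSucc, -Fin.castSucc_succ, ← mul_sum, hP]

theorem sum_mul_prod_kernel_backward (B : ℕ → X → X → R) (hB : ∀ k x', ∑ x, B k x' x = 1)
    (f : X → R) (n : ℕ) :
    ∑ O : Fin (n + 1) → X, f (O (Fin.last n)) * ∏ k : Fin n, B k (O k.succ) (O k.castSucc)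
      = ∑ x, f x := by
  induction n generalizing f with
  | zero => simp [← (Equiv.funUnique (Fin 1) X).symm.sum_comp]
  | succ n ih =>
    rw [← (Fin.snocEquiv fun _ => X).sum_comp, Fintype.sum_prod_type]
    refine sum_congr rfl fun x _ => ?_
    -- after splitting off the last coordinate `x`, the inner sum is the case `n` with `B n x` for `f`
    simp [Fin.prod_univ_castSucc, Fin.succ_castSucc, -Fin.castSucc_succ, ← mul_sum, mul_comm, ih,
      hB]

end Kernel

theorem ite_pos_mul_exp_neg_log_div_eq {a b : ℝ} (hb : 0 ≤ b) (hab : 0 < a ↔ 0 < b) :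
    (if 0 < a then a * Real.exp (-Real.log (a / b)) else 0) = b := by
  split_ifs with ha
  · rw [Real.exp_neg, Real.exp_log (div_pos ha (hab.mp ha))]
    field_simp
  · exact hb.eq_of_not_lt (mt hab.mpr ha)

theorem integral_fluctuation_theorem_general {X : Type*} [Fintype X] [DecidableEq X]
    (n : ℕ)
    (q1 : X → ℝ) (hq0 : ∀ x, 0 ≤ q1 x) (hq1 : ∑ x, q1 x = 1)
    (P : ℕ → X → X → ℝ)
    (hP0 : ∀ k x x', 0 ≤ P k x x') (hP1 : ∀ k x, ∑ x', P k x x' = 1)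
    (B : ℕ → X → X → ℝ)
    (hB0 : ∀ k x' x, 0 ≤ B k x' x) (hB1 : ∀ k x', ∑ x, B k x' x = 1)
    (Fwd : (Fin (n + 1) → X) → ℝ)
    (hFwd : ∀ O, Fwd O = q1 (O 0) * ∏ k : Fin n, P k (O k.castSucc) (O k.succ))
    (qN : X → ℝ)
    (hqN : ∀ x, qN x = ∑ O : Fin (n + 1) → X,
      if O (Fin.last n) = x then Fwd O else 0)
    (Bwd : (Fin (n + 1) → X) → ℝ)
    (hBwd : ∀ O, Bwd O
      = qN (O (Fin.last n)) * ∏ k : Fin n, B k (O k.succ) (O k.castSucc))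
    (hsupp : ∀ O, 0 < Fwd O ↔ 0 < Bwd O) :
    ∑ O : Fin (n + 1) → X,
      (if 0 < Fwd O then Fwd O * Real.exp (-Real.log (Fwd O / Bwd O)) else 0) = 1 := by
  have hFwd0 (O) : 0 ≤ Fwd O :=
    hFwd O ▸ mul_nonneg (hq0 _) (prod_nonneg fun k _ => hP0 _ _ _)
  have hqN0 (x) : 0 ≤ qN x :=
    hqN x ▸ sum_nonneg fun O _ => by split_ifs <;> simp [hFwd0]
  have hBwd0 (O) : 0 ≤ Bwd O :=
    hBwd O ▸ mul_nonneg (hqN0 _) (prod_nonneg fun k _ => hB0 _ _ _)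
  calc _ = ∑ O, Bwd O :=
        sum_congr rfl fun O _ => ite_pos_mul_exp_neg_log_div_eq (hBwd0 O) (hsupp O)
    _ = ∑ x, qN x := by simp only [hBwd]; exact sum_mul_prod_kernel_backward B hB1 qN n
    _ = ∑ O, Fwd O := by simp only [hqN]; rw [sum_comm]; simp
    _ = ∑ x, q1 x := by simp only [hFwd]; exact sum_mul_prod_kernel_forward P hP1 q1 n
    _ = 1 := hq1

/-- Integral fluctuation theorem for a Markovian system: for a forward Markov
chain on a nonempty finite set `X` with `N = n + 1 ≥ 2` time steps, initial
PMF `q₁`, forward kernels `P k`, final-time marginal `qN`, and backward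
kernels `B k`, if the forward and backward trajectory measures have equal
supports, then `Σ_{O : P(O)>0} P(O) exp(−σ(O)) = 1`, where
`σ(O) = ln(P(O)/P_B(O))`. -/
theorem integral_fluctuation_theorem {X : Type*} [Fintype X] [DecidableEq X] [Nonempty X]
    (n : ℕ) (hn : 1 ≤ n)
    (q1 : X → ℝ) (hq0 : ∀ x, 0 ≤ q1 x) (hq1 : ∑ x, q1 x = 1)
    (P : ℕ → X → X → ℝ)
    (hP0 : ∀ k x x', 0 ≤ P k x x') (hP1 : ∀ k x, ∑ x', P k x x' = 1)
    (B : ℕ → X → X → ℝ)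
    (hB0 : ∀ k x' x, 0 ≤ B k x' x) (hB1 : ∀ k x', ∑ x, B k x' x = 1)
    (Fwd : (Fin (n + 1) → X) → ℝ)
    (hFwd : ∀ O, Fwd O = q1 (O 0) * ∏ k : Fin n, P k (O k.castSucc) (O k.succ))
    (qN : X → ℝ)
    (hqN : ∀ x, qN x = ∑ O : Fin (n + 1) → X,
      if O (Fin.last n) = x then Fwd O else 0)
    (Bwd : (Fin (n + 1) → X) → ℝ)
    (hBwd : ∀ O, Bwd O
      = qN (O (Fin.last n)) * ∏ k : Fin n, B k (O k.succ) (O k.castSucc))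
    (hsupp : ∀ O, 0 < Fwd O ↔ 0 < Bwd O) :
    ∑ O : Fin (n + 1) → X,
      (if 0 < Fwd O then Fwd O * Real.exp (-Real.log (Fwd O / Bwd O)) else 0) = 1 :=
  integral_fluctuation_theorem_general n q1 hq0 hq1 P hP0 hP1 B hB0 hB1 Fwd hFwd qN hqN Bwd hBwd
    hsupp
end
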